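/- Let T ∈ L(H) be an operator on a separable infinite-dimensional complex Hilbert space H. If every nonzero eigenvalue of T has finite multiplicity, i.e. for every λ ∈ ℂ with λ ≠ 0 the eigenspace Ker(T − λI) is finite-dimensional, then T is not a universal operator. -/

import Mathlib

/-!
Universality applied to `T = 1` gives a closed invariant subspace `M ≅ H` on which `U` acts as
a nonzero scalar `c`. Then `M` lies in the eigenspace `ker (U - c)`, which is therefore
infinite-dimensional whenever `H` is.
-/

noncomputable section

/-- Universal operator on a complex Hilbert space. -/
def IsUniversal {H : Type*} [NormedAddCommGroup H] [InnerProductSpace ℂ H]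
    (U : H →L[ℂ] H) : Prop :=
  ∀ T : H →L[ℂ] H, ∃ M : Submodule ℂ H, IsClosed (M : Set H) ∧ (∀ x ∈ M, U x ∈ M) ∧
    ∃ c : ℂ, c ≠ 0 ∧ ∃ J : H ≃L[ℂ] M, ∀ x : H, U (J x : H) = c • ((J (T x) : H))

theorem Submodule.le_ker_sub_smul_one_of_apply_eq_smul {R E F : Type*} [CommRing R]
    [TopologicalSpace F] [AddCommGroup F] [IsTopologicalAddGroup F] [Module R F]
    [ContinuousConstSMul R F] [AddCommGroup E] [Module R E]
    (U : F →L[R] F) (c : R) (M : Submodule R F) (J : E ≃ₗ[R] M)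
    (hJ : ∀ x, U (J x) = c • (J x : F)) :
    M ≤ LinearMap.ker ((U - c • (1 : F →L[R] F) : F →L[R] F) : F →ₗ[R] F) := by
  intro y hy
  obtain ⟨x, hx⟩ := J.surjective ⟨y, hy⟩
  have hxy : (J x : F) = y := congrArg Subtype.val hx
  simp [← hxy, hJ]

theorem IsUniversal.exists_ne_zero_not_finiteDimensional_ker_sub_smul_one {H : Type*}
    [NormedAddCommGroup H] [InnerProductSpace ℂ H] {U : H →L[ℂ] H} (hU : IsUniversal U)
    (hinf : ¬ FiniteDimensional ℂ H) :
    ∃ c : ℂ, c ≠ 0 ∧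
      ¬ FiniteDimensional ℂ (LinearMap.ker ((U - c • (1 : H →L[ℂ] H) : H →L[ℂ] H) : H →ₗ[ℂ] H)) := by
  obtain ⟨M, -, -, c, hc, J, hJ⟩ := hU 1
  have hM := M.le_ker_sub_smul_one_of_apply_eq_smul U c J.toLinearEquiv
    (by simpa using hJ)
  refine ⟨c, hc, fun hfin => hinf ?_⟩
  have : FiniteDimensional ℂ M := Submodule.finiteDimensional_of_le hM
  exact J.toLinearEquiv.symm.finiteDimensional

theorem not_universal_of_finite_multiplicity {H : Type*} [NormedAddCommGroup H]
    [InnerProductSpace ℂ H]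
    (hinf : ¬ FiniteDimensional ℂ H)
    (T : H →L[ℂ] H)
    (h : ∀ z : ℂ, z ≠ 0 → FiniteDimensional ℂ (LinearMap.ker ((T - z • (1 : H →L[ℂ] H) : H →L[ℂ] H) : H →ₗ[ℂ] H))) :
    ¬ IsUniversal T := by
  intro hU
  obtain ⟨c, hc, hinf_ker⟩ := hU.exists_ne_zero_not_finiteDimensional_ker_sub_smul_one hinf
  exact hinf_ker (h c hc)

end
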